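/- Let T be a pruned binary tree and β a branch of T with infinitely many 1s. Define f : T → ℕ by f(s) = k(s) + 1 for each finite initial segment s of β, where k(s) is the unique k such that s followed by k zeros and then a 1 is an initial segment of β, and f(s) = 0 for all other s ∈ T. Then f is a Σ-coloring of T. -/
import Mathlib


/-- A set-theoretic binary tree: a nonempty subset of `List Bool`
closed under taking initial segments. -/
def IsSTTree (T : Set (List Bool)) : Prop :=
  T.Nonempty ∧ ∀ s ∈ T, ∀ t : List Bool, t <+: s → t ∈ T

/-- A tree is pruned if every vertex has at least one child. -/
def IsPruned (T : Set (List Bool)) : Prop :=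
  ∀ s ∈ T, s ++ [false] ∈ T ∨ s ++ [true] ∈ T

/-- The initial segment of length `n` of an infinite binary sequence. -/
def pref (β : ℕ → Bool) (n : ℕ) : List Bool := List.ofFn (fun i : Fin n => β i)

/-- `β` is a branch of `T`: all its finite initial segments lie in `T`. -/
def IsBranch (T : Set (List Bool)) (β : ℕ → Bool) : Prop := ∀ n, pref β n ∈ T

/-- `β` contains infinitely many 1s. -/
def InfManyOnes (β : ℕ → Bool) : Prop := ∀ N, ∃ n ≥ N, β n = true

/-- A Σ-coloring of a binary tree `T`:
(Σ1) the root gets color ≥ 1;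
(Σ2) if `f s = 1` then the right child `s⌢1` is in `T` with color ≥ 1;
(Σ3) if `f s ≥ 2` then the left child `s⌢0` is in `T` with color `f s - 1`. -/
def SigmaColoring (T : Set (List Bool)) (f : List Bool → ℕ) : Prop :=
  1 ≤ f [] ∧
  (∀ s ∈ T, f s = 1 → s ++ [true] ∈ T ∧ 1 ≤ f (s ++ [true])) ∧
  (∀ s ∈ T, 2 ≤ f s → s ++ [false] ∈ T ∧ f (s ++ [false]) = f s - 1)

lemma pref_len (β : ℕ → Bool) (n : ℕ) : (pref β n).length = n := by simp [pref]

lemma pref_succ (β : ℕ → Bool) (n : ℕ) : pref β (n+1) = pref β n ++ [β n] := by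
  rw [pref, List.ofFn_succ']
  simp [pref, List.concat_eq_append]

lemma eq_pref (β : ℕ → Bool) (n k : ℕ) (ht : β (n+k) = true)
    (hf : ∀ i < k, β (n+i) = false) :
    pref β n ++ List.replicate k false ++ [true] = pref β (n+k+1) := by
  induction k generalizing n with
  | zero => simp only [pref_succ]; simpa using ht
  | succ k ih =>
    have h0 : β n = false := hf 0 (by omega)
    have := ih (n+1) (by rw [show n+1+k = n+(k+1) by omega]; exact ht)
      (fun i hi => by rw [show n+1+i = n+(i+1) by omega]; exact hf (i+1) (by omega))
    rw [pref_succ, h0] at this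
    rw [show n+(k+1)+1 = n+1+k+1 by omega, ← this]
    simp [List.replicate_succ]

lemma exists_spec (β : ℕ → Bool) (h1 : InfManyOnes β) (n : ℕ) :
    ∃ k, β (n+k) = true ∧ ∀ i < k, β (n+i) = false := by
  obtain ⟨m, hm, hmt⟩ := h1 n
  have hex : ∃ k, β (n+k) = true := ⟨m - n, by rwa [show n+(m-n)=m by omega]⟩
  refine ⟨Nat.find hex, Nat.find_spec hex, fun i hi => ?_⟩
  have := Nat.find_min hex hi
  simpa using this

/-- The explicit coloring built from a branch `β` with infinitely many 1s:
`f s = k + 1` when `s` is a prefix of `β` followed in `β` by `k` zeros and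
then a 1, and `f s = 0` for all `s ∈ T` not a prefix of `β`.
Such an `f` is a Σ-coloring of `T`. -/
theorem stmt13 (T : Set (List Bool)) (hT : IsSTTree T) (hP : IsPruned T)
    (β : ℕ → Bool) (hβ : IsBranch T β) (h1 : InfManyOnes β)
    (f : List Bool → ℕ)
    (hf1 : ∀ (s : List Bool) (k : ℕ),
      s ++ List.replicate k false ++ [true] = pref β (s.length + k + 1) →
      f s = k + 1)
    (hf0 : ∀ s ∈ T, s ≠ pref β s.length → f s = 0) :
    SigmaColoring T f := by
  -- value of f on prefixes of β
  have key : ∀ n, ∃ k, f (pref β n) = k + 1 ∧ β (n+k) = true ∧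
      ∀ i < k, β (n+i) = false := by
    intro n
    obtain ⟨k, ht, hfa⟩ := exists_spec β h1 n
    refine ⟨k, ?_, ht, hfa⟩
    exact hf1 (pref β n) k (by rw [pref_len]; exact eq_pref β n k ht hfa)
  refine ⟨?_, ?_, ?_⟩
  · -- root
    obtain ⟨k, hv, _, _⟩ := key 0
    have : pref β 0 = ([] : List Bool) := by simp [pref]
    rw [this] at hv; omega
  · -- f s = 1 case
    intro s hs hfs
    have hpre : s = pref β s.length := by
      by_contra h
      have := hf0 s hs h; omega
    obtain ⟨k, hv, ht, hfa⟩ := key s.length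
    rw [← hpre] at hv
    have hk0 : k = 0 := by omega
    subst hk0
    have heq : s ++ [true] = pref β (s.length + 1) := by
      rw [pref_succ, ← hpre, Nat.add_zero] at *
      rw [ht]
    constructor
    · rw [heq]; exact hβ _
    · obtain ⟨k', hv', _, _⟩ := key (s.length + 1)
      rw [← heq] at hv'; omega
  · -- f s ≥ 2 case
    intro s hs hfs
    have hpre : s = pref β s.length := by
      by_contra h
      have := hf0 s hs h; omega
    obtain ⟨k, hv, ht, hfa⟩ := key s.length
    rw [← hpre] at hv
    have hk : 1 ≤ k := by omega
    have h0 : β s.length = false := by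
      have := hfa 0 (by omega); simpa using this
    have heq : s ++ [false] = pref β (s.length + 1) := by
      rw [pref_succ, ← hpre, h0]
    refine ⟨by rw [heq]; exact hβ _, ?_⟩
    have hv' : f (s ++ [false]) = (k - 1) + 1 := by
      apply hf1
      have hlen : (s ++ [false]).length = s.length + 1 := by simp
      rw [hlen, heq]
      have := eq_pref β (s.length + 1) (k-1)
        (by rw [show s.length+1+(k-1) = s.length + k by omega]; exact ht)
        (fun i hi => by
          rw [show s.length+1+i = s.length+(i+1) by omega]
          exact hfa (i+1) (by omega))
      exact this
    omega
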